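/- Linear fractional transformation law for Weyl-Titchmarsh matrices under change of boundary data (Lemma 2.9): Assume Hypothesis 2.1 and let α, β, γ ∈ ℂ^{m×2m} each satisfy ρρ* = I_m and ρJρ* = 0. Fix z ∈ ℂ, x_0 ∈ ℝ, c ≠ x_0. Let Ψ_α(z,·) and Ψ_γ(z,·) be the 2m×2m solutions of the Hamiltonian system with Ψ_α(z,x_0) = (α* Jα*) and Ψ_γ(z,x_0) = (γ* Jγ*), partitioned as (Θ_α Φ_α) and (Θ_γ Φ_γ). Assume β·Φ_α(z,c) and β·Φ_γ(z,c) are invertible, and set M_α = −[β·Φ_α(z,c)]^{-1}[β·Θ_α(z,c)] and M_γ = −[β·Φ_γ(z,c)]^{-1}[β·Θ_γ(z,c)]. Then αγ* + αJγ*·M_γ is invertible and M_α = [−αJγ* + αγ*·M_γ]·[αγ* + αJγ*·M_γ]^{-1}. -/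

import Mathlib

open MeasureTheory Matrix Filter Set
open scoped Matrix.Norms.L2Operator ComplexOrder

noncomputable section

abbrev DMat (m : ℕ) := Matrix (Fin m) (Fin m) ℂ
abbrev DMat2 (m : ℕ) := Matrix (Fin m ⊕ Fin m) (Fin m ⊕ Fin m) ℂ

/-- The matrix J = [[0, -I],[I, 0]]. -/
def Jm (m : ℕ) : DMat2 m := Matrix.fromBlocks 0 (-1) 1 0

/-- Imaginary part of a square complex matrix: (M - M*)/(2i). -/
def matIm {n : Type*} (M : Matrix n n ℂ) : Matrix n n ℂ :=
  (2 * Complex.I)⁻¹ • (M - Mᴴ)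

/-- Dirac-type potential: locally integrable, a.e. self-adjoint. -/
def IsDiracPotential (m : ℕ) (B : ℝ → DMat2 m) : Prop :=
  LocallyIntegrable B volume ∧ ∀ᵐ x : ℝ, (B x).IsHermitian

/-- `F` is locally absolutely continuous on `S` with a.e. derivative `F'`. -/
def AEDerivOn (m : ℕ) (S : Set ℝ) (F F' : ℝ → DMat m) : Prop :=
  LocallyIntegrableOn F' S volume ∧
    ∀ x ∈ S, ∀ y ∈ S, F y = F x + ∫ t in x..y, F' t

/-- `V` is a locally absolutely continuous solution on `S` of the Riccati equation
`V' + z V² + V B₂₂ V + B₁₂ V + V B₂₁ + B₁₁ + z = 0`. -/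
def RiccatiOn (m : ℕ) (B : ℝ → DMat2 m) (z : ℂ) (S : Set ℝ) (V : ℝ → DMat m) : Prop :=
  ∃ V' : ℝ → DMat m, AEDerivOn m S V V' ∧
    ∀ᵐ x : ℝ, x ∈ S →
      V' x + z • (V x * V x) + V x * (B x).toBlocks₂₂ * V x
        + (B x).toBlocks₁₂ * V x + V x * (B x).toBlocks₂₁ + (B x).toBlocks₁₁
        + z • (1 : DMat m) = 0

/-- Open sector with vertex 0, symmetry axis i·ℝ₊, in the upper half-plane. -/
def sector (ε : ℝ) : Set ℂ := {z : ℂ | ε < z.arg ∧ z.arg < Real.pi - ε}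

/-- Column block matrix [I; M]. -/
def colI (m : ℕ) (M : DMat m) : Matrix (Fin m ⊕ Fin m) (Fin m) ℂ := Matrix.fromRows 1 M

/-- The Weyl disk defining matrix E_c(M). -/
def Ec (m : ℕ) (z : ℂ) (x0 c : ℝ) (Ψ : ℝ → DMat2 m) (M : DMat m) : DMat m :=
  Real.sign ((x0 - c) * z.im) •
    ((Ψ c * colI m M)ᴴ * (Complex.I • Jm m) * (Ψ c * colI m M))

/-- Matrix solutions of the Hamiltonian system J Ψ' = (zA + B) Ψ on ℝ. -/
def IsHamMatSol (m : ℕ) {κ : Type} [Fintype κ] [DecidableEq κ] (A B : ℝ → DMat2 m) (z : ℂ)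
    (Ψ : ℝ → Matrix (Fin m ⊕ Fin m) κ ℂ) : Prop :=
  ∃ Ψ' : ℝ → Matrix (Fin m ⊕ Fin m) κ ℂ,
    LocallyIntegrable Ψ' volume ∧
    (∀ a b : ℝ, Ψ b = Ψ a + ∫ t in a..b, Ψ' t) ∧
    (∀ᵐ x : ℝ, Jm m * Ψ' x = (z • A x + B x) * Ψ x)

/-- Vector solutions of the Hamiltonian system. -/
def IsHamVecSol (m : ℕ) (A B : ℝ → DMat2 m) (z : ℂ)
    (ψ : ℝ → (Fin m ⊕ Fin m) → ℂ) : Prop :=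
  ∃ ψ' : ℝ → (Fin m ⊕ Fin m) → ℂ,
    LocallyIntegrable ψ' volume ∧
    (∀ a b : ℝ, ψ b = ψ a + ∫ t in a..b, ψ' t) ∧
    (∀ᵐ x : ℝ, (Jm m) *ᵥ ψ' x = (z • A x + B x) *ᵥ ψ x)

/-- Hypothesis 2.1. -/
structure Hyp21 (m : ℕ) (A B : ℝ → DMat2 m) : Prop where
  locA : LocallyIntegrable A volume
  locB : LocallyIntegrable B volume
  posA : ∀ᵐ x : ℝ, (A x).PosSemidef
  hermB : ∀ᵐ x : ℝ, (B x).IsHermitian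

/-- Atkinson's definiteness Hypothesis 2.2. -/
def Atkinson (m : ℕ) (A B : ℝ → DMat2 m) : Prop :=
  ∀ z : ℂ, ∀ ψ : ℝ → (Fin m ⊕ Fin m) → ℂ, IsHamVecSol m A B z ψ →
    (∃ x, ψ x ≠ 0) → ∀ a b : ℝ, a < b →
      0 < (∫ x in a..b, (star (ψ x)) ⬝ᵥ ((A x) *ᵥ (ψ x))).re

/-- Boundary data conditions (2.8e). -/
def IsBdry (m : ℕ) (α : Matrix (Fin m) (Fin m ⊕ Fin m) ℂ) : Prop :=
  α * αᴴ = 1 ∧ α * Jm m * αᴴ = 0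

/-- Initial value (α*  Jα*) for the normalized fundamental system. -/
def initΨ (m : ℕ) (α : Matrix (Fin m) (Fin m ⊕ Fin m) ℂ) : DMat2 m :=
  Matrix.fromCols αᴴ (Jm m * αᴴ)

/-- The interval from x₀ toward c: [x₀, c) if c > x₀, (c, x₀] if c < x₀. -/
def towardInt (x0 c : ℝ) : Set ℝ := Set.Ico x0 c ∪ Set.Ioc c x0


/-- `U(z,x) = Ψ(z,x)·[I; M]`. -/
def Ufun (m : ℕ) (Ψ : ℝ → DMat2 m) (M : DMat m) (x : ℝ) :
    Matrix (Fin m ⊕ Fin m) (Fin m) ℂ := Ψ x * colI m M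

/-- Top `m×m` component of `U`. -/
def u1fun (m : ℕ) (Ψ : ℝ → DMat2 m) (M : DMat m) (x : ℝ) : DMat m :=
  Matrix.toRows₁ (Ufun m Ψ M x)

/-- Bottom `m×m` component of `U`. -/
def u2fun (m : ℕ) (Ψ : ℝ → DMat2 m) (M : DMat m) (x : ℝ) : DMat m :=
  Matrix.toRows₂ (Ufun m Ψ M x)

/-- Cayley-type transform `ϑ = (u₁ + iσu₂)(u₁ − iσu₂)⁻¹`. -/
def cayley (m : ℕ) (σ : ℝ) (u1 u2 : DMat m) : DMat m :=
  (u1 + ((σ : ℂ) * Complex.I) • u2) * (u1 - ((σ : ℂ) * Complex.I) • u2)⁻¹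

/-- The m×m blocks of a 2m×2m matrix, indexed by `Fin 2`. -/
def blkOf (m : ℕ) (M : DMat2 m) : Fin 2 → Fin 2 → DMat m := fun a b =>
  if a = 0 then (if b = 0 then M.toBlocks₁₁ else M.toBlocks₁₂)
  else (if b = 0 then M.toBlocks₂₁ else M.toBlocks₂₂)

/-- Full-line Weyl-Titchmarsh matrix built from the half-line ones (eq. (2.620)). -/
def weylFull (m : ℕ) (Mm Mp : DMat m) : DMat2 m :=
  Matrix.fromBlocks ((Mm - Mp)⁻¹) ((2:ℂ)⁻¹ • ((Mm - Mp)⁻¹ * (Mm + Mp)))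
    ((2:ℂ)⁻¹ • ((Mm + Mp) * (Mm - Mp)⁻¹)) (Mp * (Mm - Mp)⁻¹ * Mm)

/-- Pair solutions (u₁, u₂) of the Dirac system on a set `S`. -/
def DiracPairSol (m : ℕ) (B : ℝ → DMat2 m) (z : ℂ) (S : Set ℝ)
    (u1 u2 : ℝ → DMat m) : Prop :=
  ∃ w1 w2 : ℝ → DMat m, AEDerivOn m S u1 w1 ∧ AEDerivOn m S u2 w2 ∧
    ∀ᵐ x : ℝ, x ∈ S →
      (-(w2 x) = (z • (1 : DMat m) + (B x).toBlocks₁₁) * u1 x + (B x).toBlocks₁₂ * u2 x ∧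
        w1 x = (B x).toBlocks₂₁ * u1 x + (z • (1 : DMat m) + (B x).toBlocks₂₂) * u2 x)

/-- Square-integrable solutions of the Dirac system on `[c, ∞)`. -/
def NplusSet (m : ℕ) (B : ℝ → DMat2 m) (z : ℂ) (c : ℝ) :
    Set (Set.Ici c → (Fin m ⊕ Fin m) → ℂ) :=
  {φ | ∃ w : ℝ → (Fin m ⊕ Fin m) → ℂ,
    LocallyIntegrableOn w (Set.Ici c) volume ∧
    (∀ x y : Set.Ici c, φ y = φ x + ∫ t in (x : ℝ)..(y : ℝ), w t) ∧
    (∀ᵐ t : ℝ, ∀ ht : t ∈ Set.Ici c,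
      (Jm m) *ᵥ w t = (z • (1 : DMat2 m) + B t) *ᵥ φ ⟨t, ht⟩) ∧
    IntegrableOn (fun t : ℝ =>
      if ht : t ∈ Set.Ici c then ∑ i, ‖φ ⟨t, ht⟩ i‖ ^ 2 else 0) (Set.Ici c) volume}

/-- Square-integrable solutions of the Dirac system on `(−∞, c]`. -/
def NminusSet (m : ℕ) (B : ℝ → DMat2 m) (z : ℂ) (c : ℝ) :
    Set (Set.Iic c → (Fin m ⊕ Fin m) → ℂ) :=
  {φ | ∃ w : ℝ → (Fin m ⊕ Fin m) → ℂ,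
    LocallyIntegrableOn w (Set.Iic c) volume ∧
    (∀ x y : Set.Iic c, φ y = φ x + ∫ t in (x : ℝ)..(y : ℝ), w t) ∧
    (∀ᵐ t : ℝ, ∀ ht : t ∈ Set.Iic c,
      (Jm m) *ᵥ w t = (z • (1 : DMat2 m) + B t) *ᵥ φ ⟨t, ht⟩) ∧
    IntegrableOn (fun t : ℝ =>
      if ht : t ∈ Set.Iic c then ∑ i, ‖φ ⟨t, ht⟩ i‖ ^ 2 else 0) (Set.Iic c) volume}


/-!
Two solutions of the linear system with the same value at one point coincide: the zero set of
their difference is closed, and it is open because near a zero the bound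
`‖D'‖ ≤ ‖J (zA + B)‖ ‖D‖` with a small integral of the coefficient forces `max ‖D‖ ≤ max ‖D‖ / 2`.
Hence `Ψ_α = Ψ_γ C` with the constant matrix `C = Ψ_γ(x₀)* Ψ_α(x₀) = [[S, T], [-T, S]]`,
`S = γα*`, `T = γJα*`, which is unitary because both initial values are.
Reading off the columns at `c` turns the definition of `M_α` into `(S - M_γ T) M_α = M_γ S + T`,
and the unitarity relations `S*S + T*T = 1`, `S*T = T*S` show that `S* - T* M_γ` is invertible
with inverse `S + T M_α`, which gives the formula.
-/

open Topology Metric Interval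

theorem MeasureTheory.LocallyIntegrable.intervalIntegrable {E : Type*} [NormedAddCommGroup E]
    {f : ℝ → E} (hf : LocallyIntegrable f volume) (a b : ℝ) :
    IntervalIntegrable f volume a b :=
  (hf.integrableOn_isCompact isCompact_uIcc).intervalIntegrable

theorem MeasureTheory.LocallyIntegrable.norm {E : Type*} [NormedAddCommGroup E] {f : ℝ → E}
    (hf : LocallyIntegrable f volume) : LocallyIntegrable (fun x => ‖f x‖) volume :=
  hf.mono hf.aestronglyMeasurable.norm (ae_of_all _ fun _ => (norm_norm _).le)

theorem ContinuousLinearMap.locallyIntegrable_comp {E F : Type*} [NormedAddCommGroup E]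
    [NormedSpace ℂ E] [NormedAddCommGroup F] [NormedSpace ℂ F] (L : E →L[ℂ] F) {f : ℝ → E}
    (hf : LocallyIntegrable f volume) : LocallyIntegrable (fun x => L (f x)) volume := by
  rw [locallyIntegrable_iff] at hf ⊢
  exact fun K hK => L.integrable_comp (hf K hK)

section Gronwall

variable {E : Type*} [NormedAddCommGroup E] [NormedSpace ℝ E] {D D' : ℝ → E} {k : ℝ → ℝ}

theorem continuous_of_eq_add_integral (hD' : LocallyIntegrable D' volume)
    (hD : ∀ a b, D b = D a + ∫ t in a..b, D' t) : Continuous D := by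
  rw [show D = fun b => D 0 + ∫ t in 0..b, D' t from funext (hD 0)]
  exact continuous_const.add (intervalIntegral.continuous_primitive hD'.intervalIntegrable 0)

theorem eventually_eq_zero_of_norm_deriv_le_mul_norm (hD' : LocallyIntegrable D' volume)
    (hk : LocallyIntegrable k volume) (hD : ∀ a b, D b = D a + ∫ t in a..b, D' t)
    (hbound : ∀ᵐ t, ‖D' t‖ ≤ k t * ‖D t‖) {x : ℝ} (hx : D x = 0) :
    ∀ᶠ y in 𝓝 x, D y = 0 := by
  have hDcont := continuous_of_eq_add_integral hD' hD
  set G : ℝ → ℝ := fun y => ∫ t in x..y, ‖k t‖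
  have hG : ∀ᶠ y in 𝓝 x, |G y| < 1 / 2 := by
    have hGcont : Continuous G :=
      intervalIntegral.continuous_primitive hk.norm.intervalIntegrable x
    exact (continuous_abs.comp hGcont).continuousAt.eventually_lt continuousAt_const
      (by simp [G])
  obtain ⟨δ, hδ, hGδ⟩ := Metric.nhds_basis_closedBall.eventually_iff.mp hG
  obtain ⟨y₀, hy₀, hmax⟩ := (isCompact_closedBall x δ).exists_isMaxOn
    (nonempty_closedBall.2 hδ.le) hDcont.norm.continuousOn
  set R := ‖D y₀‖
  have hR : R ≤ 1 / 2 * R := by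
    have hsub : Ι x y₀ ⊆ closedBall x δ := by
      rw [Real.closedBall_eq_Icc] at hy₀ ⊢
      exact uIoc_subset_uIcc.trans (uIcc_subset_Icc (by constructor <;> linarith) hy₀)
    have hbound' : ∀ᵐ t ∂volume.restrict (Ι x y₀), ‖D' t‖ ≤ ‖k t‖ * R := by
      filter_upwards [ae_restrict_of_ae hbound, ae_restrict_mem measurableSet_uIoc]
        with t ht htI
      exact ht.trans
        (mul_le_mul (Real.le_norm_self _) (hmax (hsub htI)) (norm_nonneg _) (norm_nonneg _))
    calc R = ‖∫ t in x..y₀, D' t‖ := by rw [← zero_add (∫ t in x..y₀, D' t), ← hx, ← hD x y₀]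
      _ ≤ |∫ t in x..y₀, ‖k t‖ * R| := intervalIntegral.norm_integral_le_abs_of_norm_le hbound'
          ((hk.norm.intervalIntegrable x y₀).mul_const R)
      _ = |G y₀| * R := by
          rw [intervalIntegral.integral_mul_const, abs_mul, abs_of_nonneg (norm_nonneg _)]
      _ ≤ 1 / 2 * R := mul_le_mul_of_nonneg_right (hGδ hy₀).le (norm_nonneg _)
  filter_upwards [closedBall_mem_nhds x hδ] with y hy
  exact norm_le_zero_iff.mp ((hmax hy).trans (by linarith [norm_nonneg (D y₀)]))

theorem eq_zero_of_norm_deriv_le_mul_norm (hD' : LocallyIntegrable D' volume)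
    (hk : LocallyIntegrable k volume) (hD : ∀ a b, D b = D a + ∫ t in a..b, D' t)
    (hbound : ∀ᵐ t, ‖D' t‖ ≤ k t * ‖D t‖) {x₀ : ℝ} (h₀ : D x₀ = 0) (x : ℝ) : D x = 0 := by
  have hDcont := continuous_of_eq_add_integral hD' hD
  have hclopen : IsClopen {x | D x = 0} :=
    ⟨isClosed_eq hDcont continuous_const, isOpen_iff_mem_nhds.mpr fun _ hy =>
      eventually_eq_zero_of_norm_deriv_le_mul_norm hD' hk hD hbound hy⟩
  exact eq_univ_iff_forall.mp (hclopen.eq_univ ⟨x₀, h₀⟩) x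

end Gronwall

theorem Jm_mul_Jm (m : ℕ) : Jm m * Jm m = -1 := by
  simp [Jm, fromBlocks_multiply, ← fromBlocks_one, fromBlocks_neg]

theorem Jm_conjTranspose (m : ℕ) : (Jm m)ᴴ = -Jm m := by
  simp [Jm, fromBlocks_conjTranspose, fromBlocks_neg]

section HamiltonianSystem

variable {m : ℕ} {A B : ℝ → DMat2 m} {z : ℂ} {κ : Type} [Fintype κ] [DecidableEq κ]

theorem IsHamMatSol.mul_right {κ' : Type} [Fintype κ'] [DecidableEq κ']
    {Ψ : ℝ → Matrix (Fin m ⊕ Fin m) κ ℂ} (hΨ : IsHamMatSol m A B z Ψ) (C : Matrix κ κ' ℂ) :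
    IsHamMatSol m A B z (fun x => Ψ x * C) := by
  obtain ⟨Ψ', hloc, hint, hode⟩ := hΨ
  let L := LinearMap.toContinuousLinearMap (mulRightLinearMap (Fin m ⊕ Fin m) ℂ C)
  refine ⟨fun x => Ψ' x * C, L.locallyIntegrable_comp hloc, fun a b => ?_, ?_⟩
  · change Ψ b * C = Ψ a * C + ∫ t in a..b, Ψ' t * C
    rw [hint a b, Matrix.add_mul]
    exact congrArg _ (L.intervalIntegral_comp_comm (hloc.intervalIntegrable a b)).symm
  · filter_upwards [hode] with x hx
    rw [← Matrix.mul_assoc, hx, Matrix.mul_assoc]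

theorem IsHamMatSol.eq_of_apply_eq (hA : LocallyIntegrable A volume)
    (hB : LocallyIntegrable B volume) {Ψ Φ : ℝ → Matrix (Fin m ⊕ Fin m) κ ℂ}
    (hΨ : IsHamMatSol m A B z Ψ) (hΦ : IsHamMatSol m A B z Φ) {x₀ : ℝ} (h₀ : Ψ x₀ = Φ x₀) :
    Ψ = Φ := by
  obtain ⟨Ψ', hΨ'loc, hΨint, hΨode⟩ := hΨ
  obtain ⟨Φ', hΦ'loc, hΦint, hΦode⟩ := hΦ
  let L := LinearMap.toContinuousLinearMap (LinearMap.mulLeft ℂ (Jm m))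
  have hk : LocallyIntegrable (fun t => ‖Jm m * (z • A t + B t)‖) volume :=
    (L.locallyIntegrable_comp ((hA.smul z).add hB)).norm
  have hD : ∀ a b, Ψ b - Φ b = Ψ a - Φ a + ∫ t in a..b, (Ψ' t - Φ' t) := fun a b => by
    rw [intervalIntegral.integral_sub (hΨ'loc.intervalIntegrable a b)
      (hΦ'loc.intervalIntegrable a b), hΨint a b, hΦint a b]
    abel
  have hbound : ∀ᵐ t, ‖Ψ' t - Φ' t‖ ≤ ‖Jm m * (z • A t + B t)‖ * ‖Ψ t - Φ t‖ := by
    filter_upwards [hΨode, hΦode] with t hΨt hΦt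
    have : Ψ' t - Φ' t = -(Jm m * (z • A t + B t) * (Ψ t - Φ t)) := by
      rw [Matrix.mul_assoc, Matrix.mul_sub, ← hΨt, ← hΦt, ← Matrix.mul_sub, ← Matrix.mul_assoc,
        Jm_mul_Jm, Matrix.neg_mul, Matrix.one_mul, neg_neg]
    rw [this, norm_neg]
    exact l2_opNorm_mul _ _
  funext x
  exact sub_eq_zero.mp (eq_zero_of_norm_deriv_le_mul_norm (hΨ'loc.sub hΦ'loc) hk hD hbound
    (sub_eq_zero.mpr h₀) x)

end HamiltonianSystem

theorem conjTranspose_initΨ_mul_initΨ {m : ℕ} (γ α : Matrix (Fin m) (Fin m ⊕ Fin m) ℂ) :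
    (initΨ m γ)ᴴ * initΨ m α =
      fromBlocks (γ * αᴴ) (γ * Jm m * αᴴ) (-(γ * Jm m * αᴴ)) (γ * αᴴ) := by
  rw [initΨ, initΨ, conjTranspose_fromCols_eq_fromRows_conjTranspose, fromRows_mul_fromCols,
    conjTranspose_mul, Jm_conjTranspose]
  simp only [conjTranspose_conjTranspose, Matrix.mul_neg, Matrix.neg_mul, ← Matrix.mul_assoc]
  rw [Matrix.mul_assoc γ (Jm m) (Jm m), Jm_mul_Jm]
  simp [Matrix.mul_assoc]

theorem initΨ_mem_unitaryGroup {m : ℕ} {α : Matrix (Fin m) (Fin m ⊕ Fin m) ℂ}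
    (hα : IsBdry m α) : initΨ m α ∈ unitaryGroup (Fin m ⊕ Fin m) ℂ := by
  rw [mem_unitaryGroup_iff', star_eq_conjTranspose, conjTranspose_initΨ_mul_initΨ, hα.1, hα.2]
  simp [fromBlocks_one]

section MatrixAlgebra

variable {n R : Type*} [Fintype n] [DecidableEq n] [CommRing R]

theorem fromBlocks_neg_mem_unitaryGroup_iff [StarRing R] {S T : Matrix n n R} :
    fromBlocks S T (-T) S ∈ unitaryGroup (n ⊕ n) R ↔ Sᴴ * S + Tᴴ * T = 1 ∧ Sᴴ * T = Tᴴ * S := by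
  rw [mem_unitaryGroup_iff', star_eq_conjTranspose, fromBlocks_conjTranspose, fromBlocks_multiply,
    ← fromBlocks_one, fromBlocks_inj]
  simp only [conjTranspose_neg, Matrix.neg_mul, Matrix.mul_neg, neg_neg]
  constructor
  · rintro ⟨h₁, h₂, -, -⟩
    exact ⟨h₁, by rwa [← sub_eq_add_neg, sub_eq_zero] at h₂⟩
  · rintro ⟨h₁, h₂⟩
    refine ⟨h₁, by rw [h₂, add_neg_cancel], by rw [h₂, add_neg_cancel], by rw [add_comm, h₁]⟩

theorem sub_mul_eq_of_neg_inv_mul {P X S T M N : Matrix n n R} (hP : IsUnit P)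
    (hK : IsUnit (X * T + P * S)) (hM : M = -(P⁻¹ * X))
    (hN : N = -((X * T + P * S)⁻¹ * (X * S - P * T))) :
    (S - M * T) * N = M * S + T := by
  have hPdet := (isUnit_iff_isUnit_det P).mp hP
  have hKdet := (isUnit_iff_isUnit_det _).mp hK
  have hSK : S - M * T = P⁻¹ * (X * T + P * S) := by
    rw [hM, Matrix.mul_add, ← Matrix.mul_assoc, nonsing_inv_mul_cancel_left _ _ hPdet]
    noncomm_ring
  rw [hSK, hN, Matrix.mul_neg, Matrix.mul_assoc, mul_nonsing_inv_cancel_left _ _ hKdet, hM,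
    Matrix.mul_sub, nonsing_inv_mul_cancel_left _ _ hPdet]
  noncomm_ring

theorem isUnit_and_eq_mul_inv_of_sub_mul_eq [StarRing R] {S T M N : Matrix n n R}
    (h₁ : Sᴴ * S + Tᴴ * T = 1) (h₂ : Sᴴ * T = Tᴴ * S) (h : (S - M * T) * N = M * S + T) :
    IsUnit (Sᴴ - Tᴴ * M) ∧ N = (Tᴴ + Sᴴ * M) * (Sᴴ - Tᴴ * M)⁻¹ := by
  have hinv : (Sᴴ - Tᴴ * M) * (S + T * N) = 1 :=
    calc (Sᴴ - Tᴴ * M) * (S + T * N)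
        = Sᴴ * S + Tᴴ * T + (Sᴴ * T - Tᴴ * S) * N + Tᴴ * ((S - M * T) * N - (M * S + T)) := by
          noncomm_ring
      _ = 1 := by rw [h₁, h₂, h, sub_self, sub_self, zero_mul, mul_zero, add_zero, add_zero]
  refine ⟨⟨⟨_, _, hinv, mul_eq_one_comm.mp hinv⟩, rfl⟩, ?_⟩
  rw [inv_eq_right_inv hinv, ← sub_eq_zero]
  calc N - (Tᴴ + Sᴴ * M) * (S + T * N)
      = (Sᴴ * S + Tᴴ * T) * N - (Tᴴ + Sᴴ * M) * (S + T * N) := by rw [h₁, Matrix.one_mul]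
    _ = Sᴴ * T - Tᴴ * S + Sᴴ * ((S - M * T) * N - (M * S + T)) := by noncomm_ring
    _ = 0 := by rw [h₂, h, sub_self, sub_self, mul_zero, add_zero]

end MatrixAlgebra

theorem statement12_general (m : ℕ) (A B : ℝ → DMat2 m) (h21 : Hyp21 m A B)
    (z : ℂ) (x0 c : ℝ)
    (α β γ : Matrix (Fin m) (Fin m ⊕ Fin m) ℂ)
    (hα : IsBdry m α) (hγ : IsBdry m γ)
    (Ψα Ψγ : ℝ → DMat2 m)
    (hΨα : IsHamMatSol m A B z Ψα) (hΨα0 : Ψα x0 = initΨ m α)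
    (hΨγ : IsHamMatSol m A B z Ψγ) (hΨγ0 : Ψγ x0 = initΨ m γ)
    (hβΦα : IsUnit (β * Matrix.toCols₂ (Ψα c)))
    (hβΦγ : IsUnit (β * Matrix.toCols₂ (Ψγ c)))
    (Mα Mγ : DMat m)
    (hMα : Mα = -((β * Matrix.toCols₂ (Ψα c))⁻¹ * (β * Matrix.toCols₁ (Ψα c))))
    (hMγ : Mγ = -((β * Matrix.toCols₂ (Ψγ c))⁻¹ * (β * Matrix.toCols₁ (Ψγ c)))) :
    IsUnit (α * γᴴ + α * Jm m * γᴴ * Mγ) ∧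
      Mα = (-(α * Jm m * γᴴ) + α * γᴴ * Mγ) * (α * γᴴ + α * Jm m * γᴴ * Mγ)⁻¹ := by
  set S := γ * αᴴ
  set T := γ * Jm m * αᴴ
  have hC : (initΨ m γ)ᴴ * initΨ m α = fromBlocks S T (-T) S := conjTranspose_initΨ_mul_initΨ γ α
  have hΨ : Ψα = fun x => Ψγ x * fromBlocks S T (-T) S := by
    refine hΨα.eq_of_apply_eq h21.locA h21.locB (hΨγ.mul_right _) (x₀ := x0) ?_
    rw [hΨα0, hΨγ0, ← hC, ← Matrix.mul_assoc, ← star_eq_conjTranspose,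
      mem_unitaryGroup_iff.mp (initΨ_mem_unitaryGroup hγ), Matrix.one_mul]
  obtain ⟨h₁, h₂⟩ := fromBlocks_neg_mem_unitaryGroup_iff.mp <|
    hC ▸ mul_mem (Unitary.star_mem (initΨ_mem_unitaryGroup hγ)) (initΨ_mem_unitaryGroup hα)
  have hΨc : Ψα c = fromCols (toCols₁ (Ψγ c)) (toCols₂ (Ψγ c)) * fromBlocks S T (-T) S := by
    rw [fromCols_toCols, hΨ]
  have hβΘα : β * toCols₁ (Ψα c) = β * toCols₁ (Ψγ c) * S - β * toCols₂ (Ψγ c) * T := by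
    rw [hΨc, fromCols_mul_fromBlocks, toCols₁_fromCols, Matrix.mul_neg, Matrix.mul_add,
      Matrix.mul_neg, sub_eq_add_neg, Matrix.mul_assoc, Matrix.mul_assoc]
  have hβΦα' : β * toCols₂ (Ψα c) = β * toCols₁ (Ψγ c) * T + β * toCols₂ (Ψγ c) * S := by
    rw [hΨc, fromCols_mul_fromBlocks, toCols₂_fromCols, Matrix.mul_add, Matrix.mul_assoc,
      Matrix.mul_assoc]
  rw [hβΘα, hβΦα'] at hMα
  rw [hβΦα'] at hβΦα
  have := isUnit_and_eq_mul_inv_of_sub_mul_eq h₁ h₂ (sub_mul_eq_of_neg_inv_mul hβΦγ hβΦα hMγ hMα)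
  simpa [S, T, Matrix.mul_assoc, Jm_conjTranspose, sub_eq_add_neg] using this

theorem statement12 (m : ℕ) (hm : 1 ≤ m) (A B : ℝ → DMat2 m) (h21 : Hyp21 m A B)
    (z : ℂ) (x0 c : ℝ) (hc : c ≠ x0)
    (α β γ : Matrix (Fin m) (Fin m ⊕ Fin m) ℂ)
    (hα : IsBdry m α) (hβ : IsBdry m β) (hγ : IsBdry m γ)
    (Ψα Ψγ : ℝ → DMat2 m)
    (hΨα : IsHamMatSol m A B z Ψα) (hΨα0 : Ψα x0 = initΨ m α)
    (hΨγ : IsHamMatSol m A B z Ψγ) (hΨγ0 : Ψγ x0 = initΨ m γ)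
    (hβΦα : IsUnit (β * Matrix.toCols₂ (Ψα c)))
    (hβΦγ : IsUnit (β * Matrix.toCols₂ (Ψγ c)))
    (Mα Mγ : DMat m)
    (hMα : Mα = -((β * Matrix.toCols₂ (Ψα c))⁻¹ * (β * Matrix.toCols₁ (Ψα c))))
    (hMγ : Mγ = -((β * Matrix.toCols₂ (Ψγ c))⁻¹ * (β * Matrix.toCols₁ (Ψγ c)))) :
    IsUnit (α * γᴴ + α * Jm m * γᴴ * Mγ) ∧
      Mα = (-(α * Jm m * γᴴ) + α * γᴴ * Mγ) * (α * γᴴ + α * Jm m * γᴴ * Mγ)⁻¹ :=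
  statement12_general m A B h21 z x0 c α β γ hα hγ Ψα Ψγ hΨα hΨα0 hΨγ hΨγ0 hβΦα hβΦγ Mα Mγ hMα hMγ
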